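/- For all n ∈ ℕ and real u, B^B_{n+1}(u) − B^B_n(u) = u·Σ_{j=0}^{n} C(n,j)·2^{n−j}·B^B_j(u), where B^B_n(u) = L(x^n) for the linear functional L on ℝ[x] determined by L((x)^B_k) = u^k; equivalently, L(x^{n+1}) − L(x^n) = u·L((x+2)^n). -/
import Mathlib


open Polynomial in
/-- The type `B` falling factorial `(x)^B_k = (x-1)(x-3)⋯(x-2k+1)` as a real polynomial. -/
noncomputable def fallBPoly (k : ℕ) : Polynomial ℝ :=
  ∏ i ∈ Finset.range k, (X - C (2 * (i : ℝ) + 1))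

open Polynomial in
lemma fallB_succ (k : ℕ) :
    fallBPoly (k + 1) = fallBPoly k * (X - C (2 * (k : ℝ) + 1)) := by
  simp [fallBPoly, Finset.prod_range_succ]

open Polynomial in
lemma fallB_comp (k : ℕ) :
    (fallBPoly (k + 1)).comp (X + 2) = (X + 1) * fallBPoly k := by
  have h : (fallBPoly (k + 1)).comp (X + 2) =
      ∏ i ∈ Finset.range (k + 1), ((X : ℝ[X]) + 2 - C (2 * (i : ℝ) + 1)) := by
    rw [fallBPoly, prod_comp]
    refine Finset.prod_congr rfl fun i _ => ?_
    simp
  rw [h, Finset.prod_range_succ']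
  have h0 : (X : ℝ[X]) + 2 - C (2 * ((0:ℕ) : ℝ) + 1) = X + 1 := by
    rw [show (2 * ((0:ℕ) : ℝ) + 1) = 1 by norm_num, C_1]
    ring
  rw [h0, mul_comm, fallBPoly]
  congr 1
  refine Finset.prod_congr rfl fun i _ => ?_
  have : C (2 * ((i : ℝ) + 1) + 1) = C (2 * (i : ℝ) + 1) + 2 := by
    rw [show (2 * ((i : ℝ) + 1) + 1) = (2 * (i : ℝ) + 1) + 2 by ring, C_add]
    norm_num [map_ofNat]
  push_cast
  rw [this]
  ring

open Polynomial in
lemma span_fallB : Submodule.span ℝ (Set.range fallBPoly) = ⊤ := by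
  set S := Submodule.span ℝ (Set.range fallBPoly) with hS
  have hXpow : ∀ n : ℕ, (X : ℝ[X]) ^ n ∈ S := by
    intro n
    induction n with
    | zero =>
        have : (1 : ℝ[X]) = fallBPoly 0 := by simp [fallBPoly]
        rw [pow_zero, this]
        exact Submodule.subset_span ⟨0, rfl⟩
    | succ n ih =>
        -- show S is stable under multiplication by X
        have hstab : ∀ q ∈ S, (X : ℝ[X]) * q ∈ S := by
          intro q hq
          have hle : S ≤ S.comap (LinearMap.mulLeft ℝ (X : ℝ[X])) := by
            rw [hS, Submodule.span_le]
            rintro _ ⟨k, rfl⟩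
            have hx : (X : ℝ[X]) * fallBPoly k =
                fallBPoly (k + 1) + (2 * (k : ℝ) + 1) • fallBPoly k := by
              rw [fallB_succ, smul_eq_C_mul]
              simp only [C_add, C_mul, C_1, map_ofNat]
              ring
            show (X : ℝ[X]) * fallBPoly k ∈ S
            rw [hx]
            exact Submodule.add_mem _ (Submodule.subset_span ⟨k + 1, rfl⟩)
              (Submodule.smul_mem _ _ (Submodule.subset_span ⟨k, rfl⟩))
          exact hle hq
        rw [pow_succ, mul_comm]
        exact hstab _ ih
  rw [eq_top_iff]
  intro p hp
  clear hp
  induction p using Polynomial.induction_on' with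
  | add p q hp hq => exact Submodule.add_mem _ hp hq
  | monomial n a =>
      rw [← smul_X_eq_monomial]
      exact Submodule.smul_mem _ _ (hXpow n)

open Polynomial in
lemma key_lemma (u : ℝ) (L : Polynomial ℝ →ₗ[ℝ] ℝ)
    (hL : ∀ k : ℕ, L (fallBPoly k) = u ^ k) (p : ℝ[X]) :
    L ((X - 1) * p) = u * L (p.comp (X + 2)) := by
  let T1 : ℝ[X] →ₗ[ℝ] ℝ := L ∘ₗ LinearMap.mulLeft ℝ ((X : ℝ[X]) - 1)
  let T2 : ℝ[X] →ₗ[ℝ] ℝ := u • (L ∘ₗ (aeval ((X : ℝ[X]) + 2)).toLinearMap)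
  have hcomp : ∀ q : ℝ[X], q.comp (X + 2) = aeval ((X : ℝ[X]) + 2) q := by
    intro q; simp [aeval_def, comp, eval₂_eq_eval_map]
  have hT : T1 = T2 := by
    apply LinearMap.ext_on span_fallB
    rintro _ ⟨k, rfl⟩
    simp only [T1, T2, LinearMap.comp_apply, LinearMap.mulLeft_apply, LinearMap.smul_apply,
      AlgHom.toLinearMap_apply, smul_eq_mul]
    rw [← hcomp]
    cases k with
    | zero =>
        have h1 : ((X : ℝ[X]) - 1) * fallBPoly 0 = fallBPoly 1 := by
          simp [fallBPoly, Finset.prod_range_succ]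
        have h2 : (fallBPoly 0).comp (X + 2) = fallBPoly 0 := by
          simp [fallBPoly]
        rw [h1, h2, hL, hL]
        ring
    | succ k =>
        have h1 : ((X : ℝ[X]) - 1) * fallBPoly (k + 1) =
            fallBPoly (k + 2) + (2 * ((k : ℝ) + 1)) • fallBPoly (k + 1) := by
          rw [show k + 2 = (k + 1) + 1 from rfl, fallB_succ (k + 1), smul_eq_C_mul]
          push_cast
          simp only [C_add, C_mul, C_1, map_ofNat]
          ring
        have h2 : (fallBPoly (k + 1)).comp (X + 2) =
            fallBPoly (k + 1) + (2 * ((k : ℝ) + 1)) • fallBPoly k := by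
          rw [fallB_comp, fallB_succ, smul_eq_C_mul]
          push_cast
          simp only [C_add, C_mul, C_1, map_ofNat]
          ring
        rw [h1, h2, map_add, map_add, map_smul, map_smul, hL, hL, hL]
        simp only [smul_eq_mul]
        ring
  have := congrArg (fun T : ℝ[X] →ₗ[ℝ] ℝ => T p) hT
  simpa only [T1, T2, LinearMap.comp_apply, LinearMap.mulLeft_apply, LinearMap.smul_apply,
    AlgHom.toLinearMap_apply, smul_eq_mul, ← hcomp] using this

open Polynomial in
theorem L_pow_succ_sub (u : ℝ) (L : Polynomial ℝ →ₗ[ℝ] ℝ)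
    (hL : ∀ k : ℕ, L (fallBPoly k) = u ^ k) (n : ℕ) :
    L (X ^ (n + 1)) - L (X ^ n) =
        u * ∑ j ∈ Finset.range (n + 1),
          (n.choose j : ℝ) * 2 ^ (n - j) * L (X ^ j) ∧
      L (X ^ (n + 1)) - L (X ^ n) = u * L ((X + 2) ^ n) := by
  have h2 : L (X ^ (n + 1)) - L (X ^ n) = u * L ((X + 2) ^ n) := by
    have := key_lemma u L hL (X ^ n)
    rw [X_pow_comp] at this
    rw [← this, ← map_sub]
    congr 1
    ring
  refine ⟨?_, h2⟩
  rw [h2]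
  congr 1
  have hb : ((X : ℝ[X]) + 2) ^ n =
      ∑ j ∈ Finset.range (n + 1), ((n.choose j : ℝ) * 2 ^ (n - j)) • (X : ℝ[X]) ^ j := by
    rw [add_pow]
    refine Finset.sum_congr rfl fun j hj => ?_
    rw [smul_eq_C_mul, C_mul, C_pow, map_ofNat, C_eq_natCast]
    ring
  rw [hb, map_sum]
  refine Finset.sum_congr rfl fun j hj => ?_
  rw [map_smul, smul_eq_mul]
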